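/- Let $g, h \in L^1[-\pi,\pi]$ and $t \in \mathbb{R}$. If for every measurable set $E \subseteq [-\pi,\pi]$ we have $\int_E g \le \sup_{|F| = |E|} \int_F h$ (where the sup is over measurable $F \subseteq [-\pi,\pi]$ of the same Lebesgue measure as $E$), then $\int_{-\pi}^{\pi} \max(g(x)-t, 0)\, dx \le \int_{-\pi}^{\pi} \max(h(x)-t, 0)\, dx$. -/

import Mathlib

open MeasureTheory Real Set

theorem star_le_implies_plus_part (g h : ℝ → ℝ) (t : ℝ)
    (hg : IntegrableOn g (Icc (-π) π)) (hh : IntegrableOn h (Icc (-π) π))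
    (hyp : ∀ E : Set ℝ, MeasurableSet E → E ⊆ Icc (-π) π →
      (∫ x in E, g x) ≤
        sSup {y : ℝ | ∃ F : Set ℝ, MeasurableSet F ∧ F ⊆ Icc (-π) π ∧
          volume F = volume E ∧ y = ∫ x in F, h x}) :
    (∫ x in Icc (-π) π, max (g x - t) 0) ≤ ∫ x in Icc (-π) π, max (h x - t) 0 := by
  set I : Set ℝ := Icc (-π) π with hI
  have hImeas : MeasurableSet I := measurableSet_Icc
  have hIfin : volume I < ⊤ := measure_Icc_lt_top
  set G := hg.1.mk g with hGdef
  have hGmeas : Measurable G := hg.1.measurable_mk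
  have hGae : g =ᵐ[volume.restrict I] G := hg.1.ae_eq_mk
  set E := I ∩ {x | t < G x} with hEdef
  have hEmeas : MeasurableSet E := hImeas.inter (measurableSet_lt measurable_const hGmeas)
  have hEsub : E ⊆ I := inter_subset_left
  have hEfin : volume E < ⊤ := lt_of_le_of_lt (measure_mono hEsub) hIfin
  -- integrabilities
  have hht : IntegrableOn (fun x => h x - t) I := hh.sub (integrableOn_const hIfin.ne)
  have hhmax : IntegrableOn (fun x => max (h x - t) 0) I := hht.pos_part
  have hgt : IntegrableOn (fun x => g x - t) I := hg.sub (integrableOn_const hIfin.ne)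
  have hGt : IntegrableOn (fun x => G x - t) I :=
    hgt.congr (hGae.mono fun x hx => by simp [hx])
  have hGE : IntegrableOn G E := IntegrableOn.mono_set (hg.congr hGae) hEsub
  have hgE : IntegrableOn g E := hg.mono_set hEsub
  -- LHS rewriting
  have step1 : (∫ x in I, max (g x - t) 0) = ∫ x in I, max (G x - t) 0 :=
    integral_congr_ae (hGae.mono fun x hx => by simp [hx])
  have step2 : (∫ x in I, max (G x - t) 0) = ∫ x in E, (G x - t) := by
    have hunion : I = E ∪ (I \ {x | t < G x}) := (Set.inter_union_diff I _).symm
    have hdisj : Disjoint E (I \ {x | t < G x}) :=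
      Set.disjoint_sdiff_right.mono_left inter_subset_right
    have hmeas2 : MeasurableSet (I \ {x | t < G x}) :=
      hImeas.diff (measurableSet_lt measurable_const hGmeas)
    have hint : IntegrableOn (fun x => max (G x - t) 0) I := hGt.pos_part
    rw [hunion, setIntegral_union hdisj hmeas2 (hint.mono_set hEsub) (hint.mono_set diff_subset)]
    have e1 : (∫ x in E, max (G x - t) 0) = ∫ x in E, (G x - t) :=
      setIntegral_congr_fun hEmeas fun x hx => max_eq_left (by have := hx.2; simp at this; linarith)
    have e2 : (∫ x in I \ {x | t < G x}, max (G x - t) 0) = 0 := by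
      rw [setIntegral_congr_fun hmeas2 (g := fun _ => (0:ℝ))
        (fun x hx => max_eq_right (by have := hx.2; simp at this; linarith))]
      simp
    rw [e1, e2, add_zero]
  have step3 : (∫ x in E, (G x - t)) = (∫ x in E, g x) - (volume E).toReal * t := by
    have hgGE : g =ᵐ[volume.restrict E] G :=
      hGae.filter_mono (ae_mono (Measure.restrict_mono hEsub le_rfl))
    rw [integral_sub hGE (integrableOn_const hEfin.ne),
      integral_congr_ae hgGE.symm, setIntegral_const, smul_eq_mul, measureReal_def]
  -- bound the sup
  have hsup := hyp E hEmeas hEsub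
  have hbound : sSup {y : ℝ | ∃ F : Set ℝ, MeasurableSet F ∧ F ⊆ Icc (-π) π ∧
      volume F = volume E ∧ y = ∫ x in F, h x} ≤
      (∫ x in I, max (h x - t) 0) + (volume E).toReal * t := by
    refine csSup_le ⟨∫ x in E, h x, ⟨E, hEmeas, hEsub, rfl, rfl⟩⟩ ?_
    rintro y ⟨F, hFmeas, hFsub, hFvol, rfl⟩
    have hFfin : volume F < ⊤ := lt_of_le_of_lt (measure_mono hFsub) hIfin
    have hhF : IntegrableOn h F := hh.mono_set hFsub
    have h1 : (∫ x in F, h x) = (∫ x in F, (h x - t)) + (volume F).toReal * t := by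
      rw [integral_sub hhF (integrableOn_const hFfin.ne), setIntegral_const,
        smul_eq_mul, measureReal_def]
      ring
    have h2 : (∫ x in F, (h x - t)) ≤ ∫ x in F, max (h x - t) 0 :=
      setIntegral_mono_on (hht.mono_set hFsub) (hhmax.mono_set hFsub) hFmeas
        fun x _ => le_max_left _ _
    have h3 : (∫ x in F, max (h x - t) 0) ≤ ∫ x in I, max (h x - t) 0 :=
      setIntegral_mono_set hhmax (Filter.Eventually.of_forall fun x => le_max_right _ _)
        (HasSubset.Subset.eventuallyLE hFsub)
    rw [h1, hFvol]
    linarith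
  rw [step1, step2, step3]
  linarith
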